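/- Let E and F be real inner product spaces, let T : F → E be a continuous linear map, and suppose there are constants 0 < c ≤ C such that c·‖p‖ ≤ ‖T p‖ ≤ C·‖p‖ for all p ∈ F. Let τ, σ > 0 satisfy τσ < 1. Then there exist constants 0 < θ ≤ Θ such that for all u ∈ E and p ∈ F: θ²(‖u‖² + ‖p‖²) ≤ (1/τ)‖u‖² − 2⟪u, T p⟫ + (1/σ)‖T p‖² ≤ Θ²(‖u‖² + ‖p‖²). -/

import Mathlib

/-!
The form is `a‖u‖² - 2⟪u, v⟫ + b‖v‖²` with `a = 1/τ`, `b = 1/σ`, `v = T p`, and `τσ < 1` means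
`ab > 1`. The identity `‖a u - v‖² + ‖u - b v‖² = (a + b) Q - (ab - 1)(‖u‖² + ‖v‖²)` gives
`Q ≥ (ab - 1)/(a + b) · (‖u‖² + ‖v‖²)`, and `-2⟪u, v⟫ ≤ ‖u‖² + ‖v‖²` gives the upper bound.
The two-sided bound on `‖T p‖` then trades `‖v‖²` for `‖p‖²`.
-/

open RealInnerProductSpace

lemma min_mul_add_le_mul_add_mul {α β x y : ℝ} (hx : 0 ≤ x) (hy : 0 ≤ y) :
    min α β * (x + y) ≤ α * x + β * y := by
  nlinarith [min_le_left α β, min_le_right α β]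

lemma mul_add_mul_le_max_mul_add {α β x y : ℝ} (hx : 0 ≤ x) (hy : 0 ≤ y) :
    α * x + β * y ≤ max α β * (x + y) := by
  nlinarith [le_max_left α β, le_max_right α β]

section QuadraticForm

variable {E : Type*} [NormedAddCommGroup E] [InnerProductSpace ℝ E]

lemma norm_smul_sub_sq_add_norm_sub_smul_sq (a b : ℝ) (u v : E) :
    ‖a • u - v‖ ^ 2 + ‖u - b • v‖ ^ 2 =
      (a + b) * (a * ‖u‖ ^ 2 - 2 * ⟪u, v⟫ + b * ‖v‖ ^ 2)
        - (a * b - 1) * (‖u‖ ^ 2 + ‖v‖ ^ 2) := by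
  simp only [norm_sub_sq_real, norm_smul, mul_pow, Real.norm_eq_abs, sq_abs,
    real_inner_smul_left, real_inner_smul_right]
  ring

lemma div_mul_norm_sq_add_le_quadForm {a b : ℝ} (hab : 0 < a + b) (u v : E) :
    (a * b - 1) / (a + b) * (‖u‖ ^ 2 + ‖v‖ ^ 2) ≤
      a * ‖u‖ ^ 2 - 2 * ⟪u, v⟫ + b * ‖v‖ ^ 2 := by
  rw [div_mul_eq_mul_div, div_le_iff₀' hab, ← sub_nonneg,
    ← norm_smul_sub_sq_add_norm_sub_smul_sq]
  positivity

lemma quadForm_le_add_one_mul (a b : ℝ) (u v : E) :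
    a * ‖u‖ ^ 2 - 2 * ⟪u, v⟫ + b * ‖v‖ ^ 2 ≤ (a + 1) * ‖u‖ ^ 2 + (b + 1) * ‖v‖ ^ 2 := by
  nlinarith [norm_add_sq_real u v, sq_nonneg ‖u + v‖]

end QuadraticForm

theorem stmt_0_general
    {E F : Type*} [NormedAddCommGroup E] [InnerProductSpace ℝ E]
    [NormedAddCommGroup F] [InnerProductSpace ℝ F]
    (T : F →L[ℝ] E) (c C : ℝ) (hc : 0 < c)
    (hbound : ∀ p : F, c * ‖p‖ ≤ ‖T p‖ ∧ ‖T p‖ ≤ C * ‖p‖)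
    (τ σ : ℝ) (hτ : 0 < τ) (hσ : 0 < σ) (hτσ : τ * σ < 1) :
    ∃ θ Θ : ℝ, 0 < θ ∧ θ ≤ Θ ∧
      ∀ (u : E) (p : F),
        θ ^ 2 * (‖u‖ ^ 2 + ‖p‖ ^ 2) ≤
            (1 / τ) * ‖u‖ ^ 2 - 2 * ⟪u, T p⟫ + (1 / σ) * ‖T p‖ ^ 2 ∧
        (1 / τ) * ‖u‖ ^ 2 - 2 * ⟪u, T p⟫ + (1 / σ) * ‖T p‖ ^ 2 ≤
            Θ ^ 2 * (‖u‖ ^ 2 + ‖p‖ ^ 2) := by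
  set a := 1 / τ
  set b := 1 / σ
  have hab : 1 < a * b := by
    rw [div_mul_div_comm, one_mul, lt_div_iff₀ (by positivity), one_mul]
    exact hτσ
  have ha_add_b : 0 < a + b := by positivity
  set κ := (a * b - 1) / (a + b)
  have hκ : 0 < κ := div_pos (by linarith) ha_add_b
  set m := κ * min 1 (c ^ 2)
  set M := max (a + 1) ((b + 1) * C ^ 2)
  have hm : 0 < m := mul_pos hκ (lt_min one_pos (by positivity))
  refine ⟨√m, √(max m M), Real.sqrt_pos.2 hm, Real.sqrt_le_sqrt (le_max_left _ _), fun u p => ?_⟩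
  rw [Real.sq_sqrt hm.le, Real.sq_sqrt (hm.le.trans (le_max_left _ _))]
  obtain ⟨hlo, hhi⟩ := hbound p
  have hTp_lo : c ^ 2 * ‖p‖ ^ 2 ≤ ‖T p‖ ^ 2 := by
    rw [← mul_pow]; exact pow_le_pow_left₀ (by positivity) hlo 2
  have hTp_hi : ‖T p‖ ^ 2 ≤ C ^ 2 * ‖p‖ ^ 2 := by
    rw [← mul_pow]; exact pow_le_pow_left₀ (norm_nonneg _) hhi 2
  constructor
  · calc m * (‖u‖ ^ 2 + ‖p‖ ^ 2)
        ≤ κ * (‖u‖ ^ 2 + ‖T p‖ ^ 2) := by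
          rw [mul_assoc]
          gcongr
          linarith [min_mul_add_le_mul_add_mul (α := 1) (β := c ^ 2) (sq_nonneg ‖u‖)
              (sq_nonneg ‖p‖)]
      _ ≤ _ := div_mul_norm_sq_add_le_quadForm ha_add_b u (T p)
  · calc _ ≤ (a + 1) * ‖u‖ ^ 2 + (b + 1) * ‖T p‖ ^ 2 := quadForm_le_add_one_mul a b u (T p)
      _ ≤ (a + 1) * ‖u‖ ^ 2 + (b + 1) * C ^ 2 * ‖p‖ ^ 2 := by
          rw [mul_assoc (b + 1)]; gcongr
      _ ≤ M * (‖u‖ ^ 2 + ‖p‖ ^ 2) := mul_add_mul_le_max_mul_add (sq_nonneg _) (sq_nonneg _)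
      _ ≤ max m M * (‖u‖ ^ 2 + ‖p‖ ^ 2) := by gcongr; exact le_max_right _ _

theorem stmt_0
    {E F : Type*} [NormedAddCommGroup E] [InnerProductSpace ℝ E]
    [NormedAddCommGroup F] [InnerProductSpace ℝ F]
    (T : F →L[ℝ] E) (c C : ℝ) (hc : 0 < c) (hcC : c ≤ C)
    (hbound : ∀ p : F, c * ‖p‖ ≤ ‖T p‖ ∧ ‖T p‖ ≤ C * ‖p‖)
    (τ σ : ℝ) (hτ : 0 < τ) (hσ : 0 < σ) (hτσ : τ * σ < 1) :
    ∃ θ Θ : ℝ, 0 < θ ∧ θ ≤ Θ ∧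
      ∀ (u : E) (p : F),
        θ ^ 2 * (‖u‖ ^ 2 + ‖p‖ ^ 2) ≤
            (1 / τ) * ‖u‖ ^ 2 - 2 * ⟪u, T p⟫ + (1 / σ) * ‖T p‖ ^ 2 ∧
        (1 / τ) * ‖u‖ ^ 2 - 2 * ⟪u, T p⟫ + (1 / σ) * ‖T p‖ ^ 2 ≤
            Θ ^ 2 * (‖u‖ ^ 2 + ‖p‖ ^ 2) :=
  stmt_0_general T c C hc hbound τ σ hτ hσ hτσ
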